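/- Let μ, ν > 0, let g_{μ,ν} be the inner product on 𝔤_0 with matrix diag(1, μ, ν) in the basis e₀, e₁, e₂, with Levi-Civita product ∇, and let A₀ be the endomorphism of 𝔤_0 with A₀(e₀) = e₂, A₀(e₁) = 2e₂, A₀(e₂) = −ν·e₀ − (2ν/μ)·e₁. Then the set {v ∈ 𝔤_0 : there exists α ∈ ℝ with ∇_u v − [u,v] + α·A₀(u) = 0 for all u ∈ 𝔤_0} equals the line ℝ·(e₀ − (1/2)e₁). (This is the distribution of symmetry of (G₀, g_{μ,ν}) at the identity, so the index of symmetry is 1.) -/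
import Mathlib


noncomputable section

open scoped BigOperators

/-- The underlying space of the 3-dimensional Lie algebras under consideration. -/
abbrev V3 : Type := Fin 3 → ℝ

/-- The standard basis `e₀, e₁, e₂`. -/
def e3 (i : Fin 3) : V3 := Pi.single i 1

/-- The bracket of the Lie algebra `𝔤_c`:
`[e₀,e₁] = 0`, `[e₂,e₀] = e₁`, `[e₂,e₁] = −c e₀ + 2 e₁`, extended bilinearly. -/
def braC (c : ℝ) (x y : V3) : V3 :=
  ![-c * (x 2 * y 1 - y 2 * x 1),
    (x 2 * y 0 - y 2 * x 0) + 2 * (x 2 * y 1 - y 2 * x 1),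
    0]

/-- The inner product with matrix `diag(1,μ,ν)` in the basis `e₀,e₁,e₂`. -/
def gD (μ ν : ℝ) (x y : V3) : ℝ := x 0 * y 0 + μ * (x 1 * y 1) + ν * (x 2 * y 2)

/-- The endomorphism `A₀` with `A₀ e₀ = e₂`, `A₀ e₁ = 2 e₂`,
`A₀ e₂ = −ν e₀ − (2ν/μ) e₁`. -/
def A0 (μ ν : ℝ) (v : V3) : V3 := ![-ν * v 2, -(2*ν/μ) * v 2, v 0 + 2 * v 1]

/-- for `(𝔤_0, g_{μ,ν})`, the set of `v` such that for some `α ∈ ℝ`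
one has `∇_u v − [u,v] + α A₀ u = 0` for all `u` is exactly the line
`ℝ (e₀ − ½ e₁)`. -/
theorem stmt15 (μ ν : ℝ) (hμ : 0 < μ) (hν : 0 < ν) (nab : V3 → V3 → V3)
    (hK : ∀ X Y Z : V3, 2 * gD μ ν (nab X Y) Z =
      gD μ ν (braC 0 X Y) Z - gD μ ν (braC 0 Y Z) X + gD μ ν (braC 0 Z X) Y) :
    ∀ v : V3,
      (∃ α : ℝ, ∀ u : V3, nab u v - braC 0 u v + α • A0 μ ν u = 0)
      ↔ ∃ t : ℝ, v = t • (e3 0 - (1/2 : ℝ) • e3 1) := by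

  have hμ' : μ ≠ 0 := ne_of_gt hμ
  have hν' : ν ≠ 0 := ne_of_gt hν
  have hnab : ∀ X Y : V3,
      nab X Y 0 = -μ * (X 1 * Y 2 + X 2 * Y 1) / 2 ∧
      nab X Y 1 = (X 2 * Y 0 - X 0 * Y 2 - 4 * X 1 * Y 2) / 2 ∧
      nab X Y 2 = μ * (X 1 * Y 0 + X 0 * Y 1 + 4 * X 1 * Y 1) / (2 * ν) := by
    intro X Y
    have h0 := hK X Y (e3 0)
    have h1 := hK X Y (e3 1)
    have h2 := hK X Y (e3 2)
    simp [gD, braC, e3, Pi.single_apply] at h0 h1 h2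
    refine ⟨by linarith, ?_, ?_⟩
    · have h1' : μ * (2 * nab X Y 1) =
          μ * (X 2 * Y 0 - X 0 * Y 2 - 4 * X 1 * Y 2) := by linear_combination h1
      have := mul_left_cancel₀ hμ' h1'
      linarith
    · have h2' : ν * (2 * nab X Y 2) =
          ν * (μ * (X 1 * Y 0 + X 0 * Y 1 + 4 * X 1 * Y 1) / ν) := by
        field_simp
        linear_combination h2
      have h2'' := mul_left_cancel₀ hν' h2'
      field_simp at h2'' ⊢
      linear_combination h2''
  intro v
  constructor
  · rintro ⟨α, h⟩
    have H : ∀ u : V3, ∀ i : Fin 3,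
        nab u v i - braC 0 u v i + α * A0 μ ν u i = 0 := by
      intro u i
      have := congrFun (h u) i
      simpa using this
    have h10 := H (e3 1) 0
    have h12 := H (e3 1) 2
    have h02 := H (e3 0) 2
    obtain ⟨n0, n1, n2⟩ := hnab (e3 1) v
    obtain ⟨m0, m1, m2⟩ := hnab (e3 0) v
    simp [e3, Pi.single_apply] at n0 n1 n2 m0 m1 m2
    simp [braC, A0, e3, Pi.single_apply, n0, n1, n2, m0, m1, m2] at h10 h12 h02
    have hv2 : v 2 = 0 := by
      rcases h10 with h | h
      · exact absurd h hμ'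
      · exact h
    have hα : μ * v 1 + α * (2 * ν) = 0 := by
      field_simp at h02
      linear_combination h02
    have hv0 : μ * (v 0 + 2 * v 1) = 0 := by
      field_simp at h12
      linear_combination h12 - 2 * hα
    have hv0' : v 0 = -2 * v 1 := by
      rcases mul_eq_zero.1 hv0 with h | h
      · exact absurd h hμ'
      · linarith
    refine ⟨v 0, ?_⟩
    funext i
    fin_cases i
    · show v 0 = _
      simp [e3, Pi.single_apply]
    · show v 1 = _
      simp [e3, Pi.single_apply]
      linarith
    · show v 2 = _
      simp [e3, Pi.single_apply, hv2]
  · rintro ⟨t, rfl⟩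
    refine ⟨μ * t / (4 * ν), ?_⟩
    intro u
    obtain ⟨n0, n1, n2⟩ := hnab u (t • (e3 0 - (1/2 : ℝ) • e3 1))
    have hv0 : (t • (e3 0 - (1/2 : ℝ) • e3 1)) 0 = t := by
      simp [e3, Pi.single_apply]
    have hv1 : (t • (e3 0 - (1/2 : ℝ) • e3 1)) 1 = -(t / 2) := by
      simp [e3, Pi.single_apply]
      ring
    have hv2 : (t • (e3 0 - (1/2 : ℝ) • e3 1)) 2 = 0 := by
      simp [e3, Pi.single_apply]
    simp only [hv0, hv1, hv2] at n0 n1 n2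
    funext i
    fin_cases i
    · show nab u _ 0 - braC 0 u _ 0 + (μ * t / (4 * ν)) * A0 μ ν u 0 = 0
      rw [n0]
      simp [braC, A0, e3, Pi.single_apply]
      field_simp
      ring
    · show nab u _ 1 - braC 0 u _ 1 + (μ * t / (4 * ν)) * A0 μ ν u 1 = 0
      rw [n1]
      simp [braC, A0, e3, Pi.single_apply]
      field_simp
      ring
    · show nab u _ 2 - braC 0 u _ 2 + (μ * t / (4 * ν)) * A0 μ ν u 2 = 0
      rw [n2]
      simp [braC, A0, e3, Pi.single_apply]
      field_simp
      ring
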